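/- The open triangle Δ (the interior of a 2-simplex in RP^2), equipped with its Hilbert metric d_Δ, is isometric to a 2-dimensional normed vector space. In particular (Δ, d_Δ) does not have thin triangles (is not Gromov hyperbolic). -/

import Mathlib

open Classical

/-- The open triangle: interior of a 2-simplex in an affine chart `ℝ² ⊂ RP²`. -/
def openTriangle : Set (EuclideanSpace ℝ (Fin 2)) :=
  {x | 0 < x 0 ∧ 0 < x 1 ∧ x 0 + x 1 < 1}

/-- The Hilbert distance between `x` and `y` in a bounded open convex `Ω ⊂ ℝ²` equals
`d`: either `x = y` and `d = 0`, or `x, y` lie on a chord with endpoints `p, q ∈ Fr Ω`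
at parameters `s, t ∈ (0,1)` and `d` is given by the cross-ratio formula. -/
def HilbertDistEq (Ω : Set (EuclideanSpace ℝ (Fin 2)))
    (x y : EuclideanSpace ℝ (Fin 2)) (d : ℝ) : Prop :=
  (x = y ∧ d = 0) ∨
  ∃ p q : EuclideanSpace ℝ (Fin 2), p ∈ frontier Ω ∧ q ∈ frontier Ω ∧
    ∃ s t : ℝ, s ∈ Set.Ioo (0:ℝ) 1 ∧ t ∈ Set.Ioo (0:ℝ) 1 ∧
      x = p + s • (q - p) ∧ y = p + t • (q - p) ∧
      d = |Real.log ((s / (1 - s)) * ((1 - t) / t))| / 2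

/-- The Hilbert distance, as a function (well defined on pairs of points of the domain). -/
noncomputable def hilbertDist (Ω : Set (EuclideanSpace ℝ (Fin 2)))
    (x y : EuclideanSpace ℝ (Fin 2)) : ℝ :=
  if h : ∃ d, HilbertDistEq Ω x y d then h.choose else 0

/-!
Write `u, v ∈ ℝ³` for the barycentric coordinates of two points `x ≠ y` of the triangle. The
chord through `x, y` leaves the triangle where one barycentric coordinate vanishes, and along
the chord every ratio `uᵢ / vᵢ` is a mediant of the two ratios attained at the endpoints. Hence
the cross-ratio is `maxᵢ (uᵢ / vᵢ) · maxⱼ (vⱼ / uⱼ)`, i.e. `d(x, y)` is half the oscillation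
`maxᵢ ℓᵢ - minⱼ ℓⱼ` of `ℓ = log u - log v`. The oscillation is a seminorm on `ℝ³` vanishing
exactly on the constants, so the chart `x ↦ (log (u₀ / u₂), log (u₁ / u₂))` is an isometry onto
`ℝ²` with the norm `v ↦ osc (v₀, v₁, 0) / 2`.

Triangles are not thin: if `a, b, c` are `ε`-close to the three vertices, then for each of the
sides `[a, c]` and `[b, c]` some barycentric coordinate is `(1 - ε) / 2` at the midpoint of
`[a, b]` but `ε` all along that side, so the midpoint is at distance at least
`log ((1 - ε) / (2 ε)) / 2` from both sides, which is unbounded as `ε → 0`.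
-/

open Real Set

section Oscillation

variable {ι : Type*}

noncomputable def osc (w : ι → ℝ) : ℝ := ⨆ i, ⨆ j, (w i - w j)

theorem sub_le_osc [Finite ι] (w : ι → ℝ) (i j : ι) : w i - w j ≤ osc w :=
  le_ciSup_of_le (Finite.bddAbove_range _) i
    (le_ciSup (f := fun j => w i - w j) (Finite.bddAbove_range _) j)

theorem osc_le [Nonempty ι] {w : ι → ℝ} {c : ℝ} (h : ∀ i j, w i - w j ≤ c) : osc w ≤ c :=
  ciSup_le fun i => ciSup_le fun j => h i j

theorem osc_nonneg [Finite ι] (w : ι → ℝ) : 0 ≤ osc w := by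
  cases isEmpty_or_nonempty ι
  · simp [osc]
  · obtain ⟨i⟩ := ‹Nonempty ι›
    simpa using sub_le_osc w i i

theorem osc_eq_zero_iff [Finite ι] [Nonempty ι] {w : ι → ℝ} :
    osc w = 0 ↔ ∀ i j, w i = w j := by
  refine ⟨fun h i j => le_antisymm ?_ ?_,
    fun h => (osc_le fun i j => ?_).antisymm (osc_nonneg w)⟩
  · simpa [h] using sub_le_osc w i j
  · simpa [h] using sub_le_osc w j i
  · simp [h i j]

theorem osc_add_le [Finite ι] [Nonempty ι] (v w : ι → ℝ) : osc (v + w) ≤ osc v + osc w :=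
  osc_le fun i j => by
    simpa only [Pi.add_apply, add_sub_add_comm] using
      add_le_add (sub_le_osc v i j) (sub_le_osc w i j)

theorem osc_neg [Finite ι] [Nonempty ι] (w : ι → ℝ) : osc (-w) = osc w :=
  (osc_le fun i j => by simpa only [Pi.neg_apply, neg_sub_neg] using sub_le_osc w j i).antisymm
    (osc_le fun i j => by simpa only [Pi.neg_apply, neg_sub_neg] using sub_le_osc (-w) j i)

theorem osc_smul_of_nonneg {c : ℝ} (hc : 0 ≤ c) (w : ι → ℝ) : osc (c • w) = c * osc w := by
  simp only [osc, Pi.smul_apply, smul_eq_mul, Real.mul_iSup_of_nonneg hc, mul_sub]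

theorem osc_smul [Finite ι] [Nonempty ι] (c : ℝ) (w : ι → ℝ) : osc (c • w) = |c| * osc w := by
  rcases le_total 0 c with hc | hc
  · rw [osc_smul_of_nonneg hc, abs_of_nonneg hc]
  · rw [abs_of_nonpos hc, ← neg_smul_neg, osc_smul_of_nonneg (neg_nonneg.2 hc), osc_neg]

theorem osc_add_const (w : ι → ℝ) (c : ℝ) : osc (fun i => w i + c) = osc w := by
  simp only [osc, add_sub_add_right_eq_sub]

theorem osc_eq_abs_sub [Finite ι] {w : ι → ℝ} {a b : ℝ} (hw : ∀ i, w i ∈ uIcc a b)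
    {i j : ι} (hi : w i = a) (hj : w j = b) : osc w = |a - b| := by
  have : Nonempty ι := ⟨i⟩
  refine le_antisymm (osc_le fun k l => ?_) (abs_sub_le_iff.2 ⟨?_, ?_⟩)
  · rw [abs_sub_comm, ← max_sub_min_eq_abs]
    exact sub_le_sub (hw k).2 (hw l).1
  · simpa [hi, hj] using sub_le_osc w i j
  · simpa [hi, hj] using sub_le_osc w j i

end Oscillation

theorem add_div_add_mem_uIcc {a b c d P Q : ℝ} (hc : 0 < c) (hd : 0 < d) (hP : 0 ≤ P)
    (hQ : 0 ≤ Q) (hden : 0 < c * P + d * Q) :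
    (a * P + b * Q) / (c * P + d * Q) ∈ uIcc (a / c) (b / d) := by
  have hlo : min (a / c) (b / d) * c ≤ a := (le_div_iff₀ hc).1 (min_le_left _ _)
  have hlo' : min (a / c) (b / d) * d ≤ b := (le_div_iff₀ hd).1 (min_le_right _ _)
  have hhi : a ≤ max (a / c) (b / d) * c := (div_le_iff₀ hc).1 (le_max_left _ _)
  have hhi' : b ≤ max (a / c) (b / d) * d := (div_le_iff₀ hd).1 (le_max_right _ _)
  constructor
  · rw [le_div_iff₀ hden]
    nlinarith [mul_le_mul_of_nonneg_right hlo hP, mul_le_mul_of_nonneg_right hlo' hQ]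
  · rw [div_le_iff₀ hden]
    nlinarith [mul_le_mul_of_nonneg_right hhi hP, mul_le_mul_of_nonneg_right hhi' hQ]

theorem osc_log_div_of_chord {ι : Type*} [Finite ι] {P Q : ι → ℝ} (hP : ∀ i, 0 ≤ P i)
    (hQ : ∀ i, 0 ≤ Q i) {i₀ j₀ : ι} (hQi : Q i₀ = 0) (hPj : P j₀ = 0) {s t : ℝ}
    (hs : s ∈ Ioo 0 1) (ht : t ∈ Ioo 0 1) (hu : ∀ i, 0 < (1 - s) * P i + s * Q i)
    (hv : ∀ i, 0 < (1 - t) * P i + t * Q i) :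
    osc (fun i => log (((1 - s) * P i + s * Q i) / ((1 - t) * P i + t * Q i))) =
      |log (s / (1 - s) * ((1 - t) / t))| := by
  obtain ⟨hs0, hs1⟩ := hs
  obtain ⟨ht0, ht1⟩ := ht
  have hA : 0 < (1 - s) / (1 - t) := div_pos (by linarith) (by linarith)
  have hB : 0 < s / t := div_pos hs0 ht0
  have hlog : ∀ i, log (((1 - s) * P i + s * Q i) / ((1 - t) * P i + t * Q i)) ∈
      uIcc (log ((1 - s) / (1 - t))) (log (s / t)) := by
    intro i
    have hr := div_pos (hu i) (hv i)
    rcases mem_uIcc.1 (add_div_add_mem_uIcc (by linarith) ht0 (hP i) (hQ i) (hv i)) with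
      ⟨h₁, h₂⟩ | ⟨h₁, h₂⟩
    · exact mem_uIcc_of_le (log_le_log hA h₁) (log_le_log hr h₂)
    · exact mem_uIcc_of_ge (log_le_log hB h₁) (log_le_log hr h₂)
  have hPi : P i₀ ≠ 0 := fun h => by simpa [h, hQi] using hu i₀
  have hQj : Q j₀ ≠ 0 := fun h => by simpa [h, hPj] using hu j₀
  rw [osc_eq_abs_sub hlog (i := i₀) (j := j₀), abs_sub_comm, ← log_div hB.ne' hA.ne']
  · congr 2
    field_simp
  · simp only [hQi, mul_zero, add_zero, mul_div_mul_right _ _ hPi]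
  · simp only [hPj, mul_zero, zero_add, mul_div_mul_right _ _ hQj]

theorem exists_one_lt_add_smul_sub_mem_frontier {E : Type*} [AddCommGroup E] [Module ℝ E]
    [TopologicalSpace E] [ContinuousAdd E] [ContinuousSMul ℝ E] {Ω : Set E} (hΩ : IsOpen Ω)
    {x y : E} (hy : y ∈ Ω) {r : ℝ} (hr : 1 < r) (hout : x + r • (y - x) ∉ Ω) :
    ∃ b : ℝ, 1 < b ∧ x + b • (y - x) ∈ frontier Ω := by
  set z := x + r • (y - x)
  obtain ⟨w, ⟨hwcl, hwseg⟩, hwΩ⟩ : ∃ w, (w ∈ closure Ω ∧ w ∈ segment ℝ y z) ∧ w ∉ Ω := by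
    by_contra! h
    exact hout ((convex_segment y z).isPreconnected.subset_of_closure_inter_subset hΩ
      ⟨y, left_mem_segment _ _ _, hy⟩ h (right_mem_segment _ _ _))
  rw [segment_eq_image'] at hwseg
  obtain ⟨θ, ⟨hθ0, -⟩, rfl⟩ := hwseg
  have hθ : θ ≠ 0 := by rintro rfl; simp [hy] at hwΩ
  refine ⟨1 + θ * (r - 1), by nlinarith [hθ0.lt_of_ne' hθ], ?_⟩
  have hw : y + θ • (z - y) = x + (1 + θ * (r - 1)) • (y - x) := by simp only [z]; module
  rw [hΩ.frontier_eq, ← hw]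
  exact ⟨hwcl, hwΩ⟩

/-- Barycentric coordinates with respect to the vertices `e₀`, `e₁` and `0`. -/
def bary (x : EuclideanSpace ℝ (Fin 2)) : Fin 3 → ℝ := ![x 0, x 1, 1 - x 0 - x 1]

theorem bary_add_smul_sub (x y : EuclideanSpace ℝ (Fin 2)) (r : ℝ) (i : Fin 3) :
    bary (x + r • (y - x)) i = (1 - r) * bary x i + r * bary y i := by
  fin_cases i <;> simp [bary] <;> ring

theorem sum_bary (x : EuclideanSpace ℝ (Fin 2)) : ∑ i, bary x i = 1 := by
  simp [bary, Fin.sum_univ_three]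

theorem eq_of_bary_le {x y : EuclideanSpace ℝ (Fin 2)} (h : ∀ i, bary x i ≤ bary y i) :
    x = y := by
  have heq := (Finset.sum_eq_sum_iff_of_le fun i _ => h i).1 (by rw [sum_bary, sum_bary])
  ext i
  fin_cases i
  exacts [heq 0 (Finset.mem_univ _), heq 1 (Finset.mem_univ _)]

theorem exists_bary_lt {x y : EuclideanSpace ℝ (Fin 2)} (hxy : x ≠ y) :
    ∃ i, bary y i < bary x i := by
  by_contra! h
  exact hxy (eq_of_bary_le h)

theorem exists_bary_le (x y : EuclideanSpace ℝ (Fin 2)) : ∃ i, bary x i ≤ bary y i := by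
  by_contra! h
  obtain rfl := eq_of_bary_le fun i => (h i).le
  exact (h 0).false

theorem continuous_bary : Continuous bary :=
  continuous_pi fun i => by fin_cases i <;> simp [bary] <;> fun_prop

theorem mem_openTriangle_iff {x : EuclideanSpace ℝ (Fin 2)} :
    x ∈ openTriangle ↔ ∀ i, 0 < bary x i := by
  simp [openTriangle, bary, Fin.forall_fin_succ, sub_sub, sub_pos]

theorem isOpen_openTriangle : IsOpen openTriangle := by
  have : openTriangle = ⋂ i, {x | 0 < bary x i} := by ext x; simp [mem_openTriangle_iff]
  rw [this]
  exact isOpen_iInter_of_finite fun i =>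
    isOpen_lt continuous_const ((continuous_apply i).comp continuous_bary)

theorem bary_nonneg_of_mem_closure {x : EuclideanSpace ℝ (Fin 2)}
    (hx : x ∈ closure openTriangle) (i : Fin 3) : 0 ≤ bary x i := by
  have hclosed : IsClosed {x : EuclideanSpace ℝ (Fin 2) | 0 ≤ bary x i} :=
    isClosed_le continuous_const ((continuous_apply i).comp continuous_bary)
  exact closure_minimal (fun y hy => (mem_openTriangle_iff.1 hy i).le) hclosed hx

theorem exists_bary_eq_zero_of_mem_frontier {p : EuclideanSpace ℝ (Fin 2)}
    (hp : p ∈ frontier openTriangle) : ∃ i, bary p i = 0 := by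
  rw [isOpen_openTriangle.frontier_eq] at hp
  by_contra! h
  exact hp.2 (mem_openTriangle_iff.2 fun i => (bary_nonneg_of_mem_closure hp.1 i).lt_of_ne' (h i))

theorem toLp_mem_openTriangle {u v : ℝ} (hu : 0 < u) (hv : 0 < v) (huv : u + v < 1) :
    !₂[u, v] ∈ openTriangle := by
  simp [openTriangle, hu, hv, huv]

theorem exists_bary_eq_of_mem_segment {a b y : EuclideanSpace ℝ (Fin 2)}
    (hy : y ∈ segment ℝ a b) : ∃ θ : ℝ, ∀ i, bary y i = (1 - θ) * bary a i + θ * bary b i := by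
  rw [segment_eq_image'] at hy
  obtain ⟨θ, -, rfl⟩ := hy
  exact ⟨θ, bary_add_smul_sub a b θ⟩

theorem segment_subset_openTriangle {x y : EuclideanSpace ℝ (Fin 2)} (hx : x ∈ openTriangle)
    (hy : y ∈ openTriangle) : segment ℝ x y ⊆ openTriangle := by
  rw [segment_eq_image']
  rintro _ ⟨θ, hθ, rfl⟩
  refine mem_openTriangle_iff.2 fun i => ?_
  rw [bary_add_smul_sub]
  exact convex_Ioi (0 : ℝ) (mem_openTriangle_iff.1 hx i) (mem_openTriangle_iff.1 hy i)
    (sub_nonneg.2 hθ.2) hθ.1 (sub_add_cancel 1 θ)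

theorem exists_one_lt_add_smul_sub_mem_frontier_openTriangle {x y : EuclideanSpace ℝ (Fin 2)}
    (hy : y ∈ openTriangle) (hxy : x ≠ y) :
    ∃ b : ℝ, 1 < b ∧ x + b • (y - x) ∈ frontier openTriangle := by
  obtain ⟨i, hi⟩ := exists_bary_lt hxy
  have hyi := mem_openTriangle_iff.1 hy i
  have hd : 0 < bary x i - bary y i := sub_pos.2 hi
  -- the `i`-th barycentric coordinate vanishes at `x + r • (y - x)`
  refine exists_one_lt_add_smul_sub_mem_frontier isOpen_openTriangle hy
    (r := bary x i / (bary x i - bary y i)) ((one_lt_div hd).2 (by linarith)) fun h => ?_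
  have hpos := mem_openTriangle_iff.1 h i
  rw [bary_add_smul_sub] at hpos
  have hzero : (1 - bary x i / (bary x i - bary y i)) * bary x i +
      bary x i / (bary x i - bary y i) * bary y i = 0 := by
    field_simp
    ring
  linarith

theorem exists_chord {x y : EuclideanSpace ℝ (Fin 2)} (hx : x ∈ openTriangle)
    (hy : y ∈ openTriangle) (hxy : x ≠ y) :
    ∃ p ∈ frontier openTriangle, ∃ q ∈ frontier openTriangle, ∃ s ∈ Ioo (0 : ℝ) 1,
      ∃ t ∈ Ioo (0 : ℝ) 1, x = p + s • (q - p) ∧ y = p + t • (q - p) := by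
  obtain ⟨b, hb, hq⟩ := exists_one_lt_add_smul_sub_mem_frontier_openTriangle hy hxy
  obtain ⟨a, ha, hp⟩ := exists_one_lt_add_smul_sub_mem_frontier_openTriangle hx hxy.symm
  have hD : 0 < a + b - 1 := by linarith
  have hqp : x + b • (y - x) - (y + a • (x - y)) = (a + b - 1) • (y - x) := by module
  refine ⟨_, hp, _, hq, (a - 1) / (a + b - 1), ⟨by positivity, ?_⟩, a / (a + b - 1),
    ⟨by positivity, ?_⟩, ?_, ?_⟩
  · rw [div_lt_one hD]; linarith
  · rw [div_lt_one hD]; linarith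
  · rw [hqp, smul_smul, div_mul_cancel₀ _ hD.ne']; module
  · rw [hqp, smul_smul, div_mul_cancel₀ _ hD.ne']; module

noncomputable def triangleDist (x y : EuclideanSpace ℝ (Fin 2)) : ℝ :=
  osc (fun i => log (bary x i / bary y i)) / 2

theorem triangleDist_self (x : EuclideanSpace ℝ (Fin 2)) : triangleDist x x = 0 := by
  have h : ∀ i, log (bary x i / bary x i) = 0 := fun i => by
    rcases eq_or_ne (bary x i) 0 with h | h <;> simp [h]
  simp [triangleDist, h, osc]

theorem triangleDist_of_chord {x y p q : EuclideanSpace ℝ (Fin 2)} (hx : x ∈ openTriangle)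
    (hy : y ∈ openTriangle) (hp : p ∈ frontier openTriangle) (hq : q ∈ frontier openTriangle)
    {s t : ℝ} (hs : s ∈ Ioo (0 : ℝ) 1) (ht : t ∈ Ioo (0 : ℝ) 1) (hxe : x = p + s • (q - p))
    (hye : y = p + t • (q - p)) :
    triangleDist x y = |log (s / (1 - s) * ((1 - t) / t))| / 2 := by
  obtain ⟨j, hPj⟩ := exists_bary_eq_zero_of_mem_frontier hp
  obtain ⟨i, hQi⟩ := exists_bary_eq_zero_of_mem_frontier hq
  have hu := mem_openTriangle_iff.1 hx
  have hv := mem_openTriangle_iff.1 hy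
  simp only [hxe, hye, bary_add_smul_sub] at hu hv
  simp only [triangleDist, hxe, hye, bary_add_smul_sub]
  rw [osc_log_div_of_chord (bary_nonneg_of_mem_closure (frontier_subset_closure hp))
    (bary_nonneg_of_mem_closure (frontier_subset_closure hq)) hQi hPj hs ht hu hv]

theorem HilbertDistEq.eq_triangleDist {x y : EuclideanSpace ℝ (Fin 2)} {d : ℝ}
    (hx : x ∈ openTriangle) (hy : y ∈ openTriangle) (h : HilbertDistEq openTriangle x y d) :
    d = triangleDist x y := by
  rcases h with ⟨rfl, rfl⟩ | ⟨p, q, hp, hq, s, t, hs, ht, hxe, hye, rfl⟩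
  · exact (triangleDist_self x).symm
  · exact (triangleDist_of_chord hx hy hp hq hs ht hxe hye).symm

theorem hilbertDist_openTriangle {x y : EuclideanSpace ℝ (Fin 2)} (hx : x ∈ openTriangle)
    (hy : y ∈ openTriangle) : hilbertDist openTriangle x y = triangleDist x y := by
  have hex : ∃ d, HilbertDistEq openTriangle x y d := by
    by_cases hxy : x = y
    · exact ⟨0, .inl ⟨hxy, rfl⟩⟩
    obtain ⟨p, hp, q, hq, s, hs, t, ht, hxe, hye⟩ := exists_chord hx hy hxy
    exact ⟨_, .inr ⟨p, q, hp, hq, s, t, hs, ht, hxe, hye, rfl⟩⟩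
  rw [hilbertDist, dif_pos hex]
  exact hex.choose_spec.eq_triangleDist hx hy

theorem log_bary_div_le_hilbertDist {x y : EuclideanSpace ℝ (Fin 2)} (hx : x ∈ openTriangle)
    (hy : y ∈ openTriangle) (i : Fin 3) :
    log (bary x i / bary y i) / 2 ≤ hilbertDist openTriangle x y := by
  obtain ⟨j, hj⟩ := exists_bary_le x y
  have hyj := mem_openTriangle_iff.1 hy j
  have hlog : log (bary x j / bary y j) ≤ 0 :=
    log_nonpos (div_nonneg (mem_openTriangle_iff.1 hx j).le hyj.le) ((div_le_one hyj).2 hj)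
  have := sub_le_osc (fun i => log (bary x i / bary y i)) i j
  rw [hilbertDist_openTriangle hx hy, triangleDist]
  linarith

noncomputable def triangleNorm (v : EuclideanSpace ℝ (Fin 2)) : ℝ := osc ![v 0, v 1, 0] / 2

theorem triangleNorm_nonneg (v : EuclideanSpace ℝ (Fin 2)) : 0 ≤ triangleNorm v :=
  div_nonneg (osc_nonneg _) zero_le_two

theorem triangleNorm_eq_zero_iff {v : EuclideanSpace ℝ (Fin 2)} :
    triangleNorm v = 0 ↔ v = 0 := by
  rw [triangleNorm, div_eq_zero_iff, osc_eq_zero_iff]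
  refine ⟨fun h => ?_, fun h => .inl fun i j => by fin_cases i <;> fin_cases j <;> simp [h]⟩
  have h : ∀ i j, ![v 0, v 1, 0] i = ![v 0, v 1, 0] j := h.resolve_right two_ne_zero
  ext i
  fin_cases i
  exacts [h 0 2, h 1 2]

theorem triangleNorm_smul (c : ℝ) (v : EuclideanSpace ℝ (Fin 2)) :
    triangleNorm (c • v) = |c| * triangleNorm v := by
  have h : ![(c • v) 0, (c • v) 1, 0] = c • ![v 0, v 1, 0] := by
    ext i; fin_cases i <;> simp
  rw [triangleNorm, triangleNorm, h, osc_smul, mul_div_assoc]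

theorem triangleNorm_add_le (v w : EuclideanSpace ℝ (Fin 2)) :
    triangleNorm (v + w) ≤ triangleNorm v + triangleNorm w := by
  have h : ![(v + w) 0, (v + w) 1, 0] = ![v 0, v 1, 0] + ![w 0, w 1, 0] := by
    ext i; fin_cases i <;> simp
  rw [triangleNorm, triangleNorm, triangleNorm, h, ← add_div]
  exact div_le_div_of_nonneg_right (osc_add_le _ _) zero_le_two

noncomputable def triangleChart (x : EuclideanSpace ℝ (Fin 2)) : EuclideanSpace ℝ (Fin 2) :=
  !₂[log (bary x 0 / bary x 2), log (bary x 1 / bary x 2)]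

noncomputable def triangleChartInv (w : EuclideanSpace ℝ (Fin 2)) : EuclideanSpace ℝ (Fin 2) :=
  (1 + exp (w 0) + exp (w 1))⁻¹ • !₂[exp (w 0), exp (w 1)]

theorem bary_triangleChartInv (w : EuclideanSpace ℝ (Fin 2)) (i : Fin 3) :
    bary (triangleChartInv w) i =
      ![exp (w 0), exp (w 1), 1] i / (1 + exp (w 0) + exp (w 1)) := by
  have : 0 < 1 + exp (w 0) + exp (w 1) := by positivity
  fin_cases i <;> simp [bary, triangleChartInv] <;> field_simp
  ring

theorem triangleChart_bijOn : BijOn triangleChart openTriangle univ := by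
  refine InvOn.bijOn (f' := triangleChartInv) ⟨fun x hx => ?_, fun w _ => ?_⟩
    (mapsTo_univ _ _) fun w _ => ?_
  · have hx' := mem_openTriangle_iff.1 hx
    have h2 := (hx' 2).ne'
    have hsum : 1 + bary x 0 / bary x 2 + bary x 1 / bary x 2 = (bary x 2)⁻¹ := by
      have := sum_bary x
      rw [Fin.sum_univ_three] at this
      field_simp
      linarith
    refine eq_of_bary_le fun i => le_of_eq ?_
    rw [bary_triangleChartInv]
    fin_cases i <;> simp [triangleChart, exp_log, hx', hsum] <;> field_simp
  · have hD : 0 < 1 + exp (w 0) + exp (w 1) := by positivity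
    ext i
    fin_cases i <;> simp [triangleChart, bary_triangleChartInv] <;> field_simp <;> simp
  · refine mem_openTriangle_iff.2 fun i => ?_
    rw [bary_triangleChartInv]
    fin_cases i <;> simp <;> positivity

theorem triangleDist_eq_triangleNorm {x y : EuclideanSpace ℝ (Fin 2)} (hx : x ∈ openTriangle)
    (hy : y ∈ openTriangle) :
    triangleDist x y = triangleNorm (triangleChart x - triangleChart y) := by
  have hx' := fun i => (mem_openTriangle_iff.1 hx i).ne'
  have hy' := fun i => (mem_openTriangle_iff.1 hy i).ne'
  have h : (fun i => log (bary x i / bary y i)) = fun i =>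
      ![(triangleChart x - triangleChart y) 0, (triangleChart x - triangleChart y) 1, 0] i +
        log (bary x 2 / bary y 2) := by
    ext i
    fin_cases i <;> simp [triangleChart, log_div, hx', hy'] <;> ring
  rw [triangleDist, triangleNorm, h, osc_add_const]

theorem log_le_hilbertDist_of_mem_sides {ε : ℝ} (hε : 0 < ε) (hε3 : 3 * ε < 1)
    {y : EuclideanSpace ℝ (Fin 2)}
    (hy : y ∈ segment ℝ !₂[ε, ε] !₂[ε, 1 - 2 * ε] ∪ segment ℝ !₂[1 - 2 * ε, ε] !₂[ε, 1 - 2 * ε]) :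
    log ((1 - ε) / (2 * ε)) / 2 ≤ hilbertDist openTriangle !₂[(1 - ε) / 2, ε] y := by
  have ha := toLp_mem_openTriangle (u := ε) (v := ε) hε hε (by linarith)
  have hb := toLp_mem_openTriangle (u := 1 - 2 * ε) (v := ε) (by linarith) hε (by linarith)
  have hc := toLp_mem_openTriangle (u := ε) (v := 1 - 2 * ε) hε (by linarith) (by linarith)
  have hx := toLp_mem_openTriangle (u := (1 - ε) / 2) (v := ε) (by linarith) hε (by linarith)
  have hyΔ : y ∈ openTriangle :=
    hy.elim (segment_subset_openTriangle ha hc ·) (segment_subset_openTriangle hb hc ·)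
  obtain ⟨i, hxi, hyi⟩ : ∃ i, bary !₂[(1 - ε) / 2, ε] i = (1 - ε) / 2 ∧ bary y i = ε := by
    rcases hy with hy | hy <;> obtain ⟨θ, hθ⟩ := exists_bary_eq_of_mem_segment hy
    · exact ⟨0, by simp [bary], by rw [hθ]; simp [bary]; ring⟩
    · exact ⟨2, by simp [bary]; ring, by rw [hθ]; simp [bary]; ring⟩
  have := log_bary_div_le_hilbertDist hx hyΔ i
  rwa [hxi, hyi, div_div] at this

theorem exists_far_from_sides (δ : ℝ) :
    ∃ a ∈ openTriangle, ∃ b ∈ openTriangle, ∃ c ∈ openTriangle, ∃ x ∈ segment ℝ a b,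
      ∀ y ∈ segment ℝ a c ∪ segment ℝ b c, δ < hilbertDist openTriangle x y := by
  set ε : ℝ := (2 * exp (2 * δ) + 3)⁻¹ with hεdef
  have hε : 0 < ε := by positivity
  have hε3 : 3 * ε < 1 := by
    rw [hεdef, ← div_eq_mul_inv, div_lt_one (by positivity)]
    linarith [exp_pos (2 * δ)]
  have hlog : δ < log ((1 - ε) / (2 * ε)) / 2 := by
    have hfar : (1 - ε) / (2 * ε) = exp (2 * δ) + 1 := by
      rw [hεdef]
      field_simp
      ring
    rw [hfar, lt_div_iff₀ two_pos, ← log_exp (δ * 2), mul_comm]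
    exact log_lt_log (exp_pos _) (lt_add_one _)
  have hmid : !₂[(1 - ε) / 2, ε] ∈ segment ℝ !₂[ε, ε] !₂[1 - 2 * ε, ε] := by
    rw [segment_eq_image']
    refine ⟨1 / 2, ⟨by norm_num, by norm_num⟩, ?_⟩
    ext i
    fin_cases i <;> simp
    ring
  exact ⟨_, toLp_mem_openTriangle (u := ε) (v := ε) hε hε (by linarith),
    _, toLp_mem_openTriangle (u := 1 - 2 * ε) (v := ε) (by linarith) hε (by linarith),
    _, toLp_mem_openTriangle (u := ε) (v := 1 - 2 * ε) hε (by linarith) (by linarith),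
    _, hmid, fun y hy => hlog.trans_le (log_le_hilbertDist_of_mem_sides hε hε3 hy)⟩

/-- **The Hilbert metric of a triangle is a norm metric, hence not thin.** The open
triangle `Δ ⊂ RP²` with its Hilbert metric is isometric to a 2-dimensional normed
vector space; in particular `(Δ, d_Δ)` does not have thin triangles: there is no
`δ > 0` such that for every triangle with vertices in `Δ` each side lies in the
`δ`-neighborhood of the union of the other two sides. -/
theorem triangle_hilbert_isometric_to_norm_and_not_thin :
    (∃ (N : EuclideanSpace ℝ (Fin 2) → ℝ) (φ : EuclideanSpace ℝ (Fin 2) → EuclideanSpace ℝ (Fin 2)),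
      (∀ v, 0 ≤ N v) ∧ (∀ v, N v = 0 ↔ v = 0) ∧
      (∀ (c : ℝ) (v), N (c • v) = |c| * N v) ∧
      (∀ v w, N (v + w) ≤ N v + N w) ∧
      Set.BijOn φ openTriangle Set.univ ∧
      (∀ x ∈ openTriangle, ∀ y ∈ openTriangle,
        hilbertDist openTriangle x y = N (φ x - φ y))) ∧
    ¬ ∃ δ : ℝ, 0 < δ ∧ ∀ a ∈ openTriangle, ∀ b ∈ openTriangle, ∀ c ∈ openTriangle,
      ∀ x ∈ segment ℝ a b, ∃ y ∈ segment ℝ a c ∪ segment ℝ b c,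
        hilbertDist openTriangle x y ≤ δ := by
  refine ⟨⟨triangleNorm, triangleChart, triangleNorm_nonneg, fun v => triangleNorm_eq_zero_iff,
    triangleNorm_smul, triangleNorm_add_le, triangleChart_bijOn, fun x hx y hy => ?_⟩, ?_⟩
  · rw [hilbertDist_openTriangle hx hy, triangleDist_eq_triangleNorm hx hy]
  · rintro ⟨δ, -, hthin⟩
    obtain ⟨a, ha, b, hb, c, hc, x, hx, hfar⟩ := exists_far_from_sides δ
    obtain ⟨y, hy, hle⟩ := hthin a ha b hb c hc x hx
    exact (hfar y hy).not_ge hle
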